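/- Let G be a finite simple graph, let u and w be distinct nonadjacent vertices of G, and let φ be a proper k-coloring of G with φ(u) = φ(w). Let G' be the graph obtained from G by identifying u and w into a single vertex (with an edge between two vertices of G' whenever some pair of their preimages is adjacent in G), and let φ' be the induced coloring of G' (which is a proper k-coloring). If ψ' is obtained from φ' by a single Kempe change in colors {a, b}, then the lifted coloring ψ of G, defined by ψ(x) = ψ'(image of x), is a proper k-coloring of G, and ψ is obtained from φ by a sequence of Kempe changes in colors {a, b}, namely by swapping a and b on every Kempe chain of G contained in the preimage of the changed chain of G'. In particular each vertex of G changes its color at most once, and it changes its color if and only if its image in G' does. -/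

import Mathlib

/-!
The quotient map `G → G'` is a graph homomorphism along which `φ'` pulls back to `φ`,
because `φ u = φ w`. Hence the preimage of the changed Kempe chain of `G'` consists of
`a/b`-colored vertices and is closed under `a/b`-adjacency in `G`: it is a union of Kempe
chains of `G`. Swapping these chains one at a time is a sequence of Kempe changes ending at
the lifted coloring, and since the chains are disjoint every vertex changes its color at
most once.
-/

/-- `φ` is a proper `k`-coloring of `G`: adjacent vertices get different colors. -/
def IsProperColoring {V : Type*} (G : SimpleGraph V) (k : ℕ) (φ : V → Fin k) : Prop :=
  ∀ ⦃u v : V⦄, G.Adj u v → φ u ≠ φ v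

/-- The spanning subgraph of `G` keeping only edges between vertices colored `a` or `b`:
its connected components meeting the `a/b`-colored vertices are the Kempe chains. -/
def kempeSub {V : Type*} (G : SimpleGraph V) {k : ℕ} (φ : V → Fin k) (a b : Fin k) :
    SimpleGraph V where
  Adj x y := G.Adj x y ∧ (φ x = a ∨ φ x = b) ∧ (φ y = a ∨ φ y = b)
  symm := ⟨fun x y ⟨h, hx, hy⟩ => ⟨h.symm, hy, hx⟩⟩
  loopless := ⟨fun x h => G.loopless.irrefl x h.1⟩

/-- `ψ` is obtained from `φ` by a single Kempe change in the pair of colors `{a, b}`: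
the colors `a` and `b` are swapped on the Kempe chain containing some vertex `v`
colored `a` or `b`, and all other vertices keep their color. -/
def KempeStepAB {V : Type*} (G : SimpleGraph V) {k : ℕ} (a b : Fin k) (φ ψ : V → Fin k) :
    Prop :=
  a ≠ b ∧ ∃ v : V, (φ v = a ∨ φ v = b) ∧
    (∀ u : V, (kempeSub G φ a b).Reachable v u → ψ u = Equiv.swap a b (φ u)) ∧
    (∀ u : V, ¬ (kempeSub G φ a b).Reachable v u → ψ u = φ u)

/-- `ψ` is obtained from `φ` by a single Kempe change (in some pair of colors). -/
def KempeStep {V : Type*} (G : SimpleGraph V) (k : ℕ) (φ ψ : V → Fin k) : Prop :=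
  ∃ a b : Fin k, KempeStepAB G a b φ ψ

/-- The number of indices `i < m` at which the vertex `x` changes its color in the
sequence of colorings `σ 0, σ 1, …, σ m`. -/
def changeCount {W : Type*} {k : ℕ} (m : ℕ) (σ : ℕ → W → Fin k) (x : W) : ℕ :=
  ((Finset.range m).filter fun i => σ i x ≠ σ (i + 1) x).card

/-- The map sending `x` to `u` if `x = w`, and to itself otherwise. -/
def mergeMap {V : Type*} [DecidableEq V] (u w : V) (x : V) : V := if x = w then u else x

/-- The graph obtained from `G` by identifying the vertices `u` and `w` into the single
vertex `u`: two (distinct) vertices are adjacent iff some pair of their preimages under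
`mergeMap u w` is adjacent in `G`.  (The vertex `w` is left isolated; the identified
graph `G'` proper is the induced subgraph on `{y | y ≠ w}`.) -/
def mergeGraph {V : Type*} [DecidableEq V] (G : SimpleGraph V) (u w : V) :
    SimpleGraph V where
  Adj a b := a ≠ b ∧ ∃ x y, G.Adj x y ∧ mergeMap u w x = a ∧ mergeMap u w y = b
  symm := ⟨fun a b ⟨hab, x, y, h, hx, hy⟩ => ⟨hab.symm, y, x, h.symm, hy, hx⟩⟩
  loopless := ⟨fun a h => h.1 rfl⟩

/-- The quotient map from `V(G)` to the vertex set of the identified graph. -/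
def mergeTo {V : Type*} [DecidableEq V] (u w : V) (huw : u ≠ w) (x : V) :
    ↥{y : V | y ≠ w} :=
  if h : x = w then ⟨u, huw⟩ else ⟨x, h⟩


section Kempe

variable {V : Type*} {G : SimpleGraph V} {k : ℕ} {φ ψ : V → Fin k} {a b : Fin k}

theorem Equiv.swap_apply_eq_or_eq_iff {α : Type*} [DecidableEq α] (a b c : α) :
    (Equiv.swap a b c = a ∨ Equiv.swap a b c = b) ↔ (c = a ∨ c = b) := by
  rw [Equiv.swap_apply_def]
  split_ifs <;> aesop

theorem kempeSub_congr (h : ∀ x, (ψ x = a ∨ ψ x = b) ↔ (φ x = a ∨ φ x = b)) :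
    kempeSub G ψ a b = kempeSub G φ a b := by
  ext x y
  simp only [kempeSub, h]

theorem mem_ab_of_kempeSub_reachable {x y : V} (hxy : (kempeSub G φ a b).Reachable x y)
    (hx : φ x = a ∨ φ x = b) : φ y = a ∨ φ y = b := by
  obtain ⟨p⟩ := hxy
  induction p with
  | nil => exact hx
  | cons h _ ih => exact ih h.2.2

theorem not_mem_ab_of_adj_of_not_kempeSub_reachable {v x y : V}
    (hvx : (kempeSub G φ a b).Reachable v x) (hv : φ v = a ∨ φ v = b) (hxy : G.Adj x y)
    (hvy : ¬ (kempeSub G φ a b).Reachable v y) : ¬ (φ y = a ∨ φ y = b) := fun hy =>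
  hvy (hvx.trans (SimpleGraph.Adj.reachable ⟨hxy, mem_ab_of_kempeSub_reachable hvx hv, hy⟩))

theorem KempeStepAB.isProperColoring (h : KempeStepAB G a b φ ψ)
    (hφ : IsProperColoring G k φ) : IsProperColoring G k ψ := by
  obtain ⟨-, v, hv, hin, hout⟩ := h
  have mixed : ∀ {x y}, G.Adj x y → (kempeSub G φ a b).Reachable v x →
      ¬ (kempeSub G φ a b).Reachable v y → ψ x ≠ ψ y := fun hxy hx hy hψ => by
    refine not_mem_ab_of_adj_of_not_kempeSub_reachable hx hv hxy hy ?_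
    rw [← hout _ hy, ← hψ, hin _ hx, Equiv.swap_apply_eq_or_eq_iff]
    exact mem_ab_of_kempeSub_reachable hx hv
  intro x y hxy
  by_cases hx : (kempeSub G φ a b).Reachable v x <;>
    by_cases hy : (kempeSub G φ a b).Reachable v y
  · rw [hin _ hx, hin _ hy]
    exact (Equiv.injective _).ne (hφ hxy)
  · exact mixed hxy hx hy
  · exact (mixed hxy.symm hy hx).symm
  · rw [hout _ hx, hout _ hy]
    exact hφ hxy

theorem IsProperColoring.comp {W : Type*} {G' : SimpleGraph W} {ψ' : W → Fin k}
    (h : IsProperColoring G' k ψ') (f : G →g G') : IsProperColoring G k (ψ' ∘ f) :=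
  fun _ _ hxy => h (f.map_rel hxy)

open Classical in
noncomputable def swapOnChains (G : SimpleGraph V) (φ : V → Fin k) (a b : Fin k)
    (s : Set (kempeSub G φ a b).ConnectedComponent) : V → Fin k :=
  fun x => if (kempeSub G φ a b).connectedComponentMk x ∈ s then Equiv.swap a b (φ x) else φ x

theorem swapOnChains_empty : swapOnChains G φ a b ∅ = φ := by
  funext x
  simp [swapOnChains]

theorem swapOnChains_mem_ab_iff (s : Set (kempeSub G φ a b).ConnectedComponent) (x : V) :
    (swapOnChains G φ a b s x = a ∨ swapOnChains G φ a b s x = b) ↔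
      (φ x = a ∨ φ x = b) := by
  unfold swapOnChains
  split_ifs
  · exact Equiv.swap_apply_eq_or_eq_iff a b (φ x)
  · rfl

theorem swapOnChains_insert_apply_of_ne (s : Set (kempeSub G φ a b).ConnectedComponent)
    {c : (kempeSub G φ a b).ConnectedComponent} {x : V}
    (hx : (kempeSub G φ a b).connectedComponentMk x ≠ c) :
    swapOnChains G φ a b (insert c s) x = swapOnChains G φ a b s x := by
  unfold swapOnChains
  split_ifs <;> simp_all

theorem kempeStepAB_swapOnChains_insert (hab : a ≠ b)
    (s : Set (kempeSub G φ a b).ConnectedComponent) {v : V} (hv : φ v = a ∨ φ v = b)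
    (hvs : (kempeSub G φ a b).connectedComponentMk v ∉ s) :
    KempeStepAB G a b (swapOnChains G φ a b s)
      (swapOnChains G φ a b (insert ((kempeSub G φ a b).connectedComponentMk v) s)) := by
  rw [KempeStepAB, kempeSub_congr (swapOnChains_mem_ab_iff s)]
  refine ⟨hab, v, (swapOnChains_mem_ab_iff s v).2 hv, fun x hx => ?_, fun x hx => ?_⟩
  · have hxv := SimpleGraph.ConnectedComponent.sound hx.symm
    simp [swapOnChains, hxv, hvs]
  · have hxv : (kempeSub G φ a b).connectedComponentMk x ≠
        (kempeSub G φ a b).connectedComponentMk v :=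
      fun h => hx (SimpleGraph.ConnectedComponent.exact h.symm)
    exact swapOnChains_insert_apply_of_ne s hxv

theorem exists_kempe_seq_swapOnChains (hab : a ≠ b)
    (l : List (kempeSub G φ a b).ConnectedComponent) (hl : l.Nodup)
    (hl_ab : ∀ c ∈ l,
      ∃ v, (kempeSub G φ a b).connectedComponentMk v = c ∧ (φ v = a ∨ φ v = b)) :
    ∃ (m : ℕ) (σ : ℕ → V → Fin k),
      σ 0 = φ ∧ σ m = swapOnChains G φ a b {c | c ∈ l} ∧
      (∀ i < m, KempeStepAB G a b (σ i) (σ (i + 1))) ∧ ∀ x, changeCount m σ x ≤ 1 := by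
  have setOf_mem_take_succ : ∀ i (hi : i < l.length),
      {c | c ∈ l.take (i + 1)} = insert l[i] {c | c ∈ l.take i} := by
    intro i hi
    ext c
    rw [Set.mem_insert_iff, Set.mem_ofPred_eq, Set.mem_ofPred_eq,
      ← List.take_concat_get' l i hi, List.mem_append, List.mem_singleton, or_comm]
  have not_mem_take : ∀ i (hi : i < l.length), l[i] ∉ l.take i := by
    intro i hi h
    obtain ⟨j, hj, hji⟩ := List.mem_take_iff_getElem.1 h
    have := (hl.getElem_inj_iff).1 hji
    omega
  refine ⟨l.length, fun i => swapOnChains G φ a b {c | c ∈ l.take i}, ?_, ?_,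
    fun i hi => ?_, fun x => ?_⟩
  · simpa using swapOnChains_empty
  · simp
  · obtain ⟨v, hvc, hv⟩ := hl_ab l[i] (List.getElem_mem hi)
    dsimp only
    rw [setOf_mem_take_succ i hi, ← hvc]
    exact kempeStepAB_swapOnChains_insert hab _ hv (hvc ▸ not_mem_take i hi)
  · have changes_only_at : ∀ i (hi : i < l.length),
        swapOnChains G φ a b {c | c ∈ l.take i} x ≠
          swapOnChains G φ a b {c | c ∈ l.take (i + 1)} x →
        (kempeSub G φ a b).connectedComponentMk x = l[i] := by
      intro i hi hne
      by_contra hx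
      rw [setOf_mem_take_succ i hi, swapOnChains_insert_apply_of_ne _ hx] at hne
      exact hne rfl
    refine Finset.card_le_one.2 fun i hi j hj => ?_
    simp only [Finset.mem_filter, Finset.mem_range] at hi hj
    exact hl.getElem_inj_iff.1
      ((changes_only_at i hi.1 hi.2).symm.trans (changes_only_at j hj.1 hj.2))

theorem exists_kempe_seq_of_swap_on_closed [Finite V] (hab : a ≠ b) (S : Set V)
    (hS_ab : ∀ x ∈ S, φ x = a ∨ φ x = b)
    (hS_closed : ∀ x ∈ S, ∀ y, (kempeSub G φ a b).Adj x y → y ∈ S)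
    (hψS : ∀ x ∈ S, ψ x = Equiv.swap a b (φ x)) (hψ_compl : ∀ x ∉ S, ψ x = φ x) :
    ∃ (m : ℕ) (σ : ℕ → V → Fin k), σ 0 = φ ∧ σ m = ψ ∧
      (∀ i < m, KempeStepAB G a b (σ i) (σ (i + 1))) ∧ ∀ x, changeCount m σ x ≤ 1 := by
  set H := kempeSub G φ a b
  have hS_reach : ∀ x ∈ S, ∀ y, H.Reachable x y → y ∈ S := by
    rintro x hx y ⟨p⟩
    induction p with
    | nil => exact hx
    | cons h _ ih => exact ih (hS_closed _ hx _ h)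
  have mk_mem_image : ∀ x, H.connectedComponentMk x ∈ H.connectedComponentMk '' S ↔ x ∈ S :=
    fun x => ⟨fun ⟨y, hy, hyx⟩ => hS_reach y hy x (SimpleGraph.ConnectedComponent.exact hyx),
      fun hx => ⟨x, hx, rfl⟩⟩
  obtain ⟨t, ht⟩ := (Set.toFinite (H.connectedComponentMk '' S)).exists_finset_coe
  obtain ⟨m, σ, h0, hm, hsteps, hcount⟩ := exists_kempe_seq_swapOnChains hab t.toList
    t.nodup_toList fun c hc => by
      obtain ⟨x, hx, rfl⟩ : c ∈ H.connectedComponentMk '' S := by simpa [← ht] using hc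
      exact ⟨x, rfl, hS_ab x hx⟩
  refine ⟨m, σ, h0, hm.trans (funext fun x => ?_), hsteps, hcount⟩
  have hmem : (H.connectedComponentMk x ∈ {c | c ∈ t.toList}) ↔ x ∈ S := by
    simpa [ht] using mk_mem_image x
  by_cases hx : x ∈ S
  · rw [swapOnChains, if_pos (hmem.2 hx), hψS x hx]
  · rw [swapOnChains, if_neg (mt hmem.1 hx), hψ_compl x hx]

theorem KempeStepAB.exists_kempe_seq_comp [Finite V] {W : Type*} {G' : SimpleGraph W}
    {φ' ψ' : W → Fin k} (h : KempeStepAB G' a b φ' ψ') (f : G →g G') :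
    ∃ (m : ℕ) (σ : ℕ → V → Fin k), σ 0 = φ' ∘ f ∧ σ m = ψ' ∘ f ∧
      (∀ i < m, KempeStepAB G a b (σ i) (σ (i + 1))) ∧ ∀ x, changeCount m σ x ≤ 1 := by
  obtain ⟨hab, v, hv, hin, hout⟩ := h
  refine exists_kempe_seq_of_swap_on_closed hab
    {x | (kempeSub G' φ' a b).Reachable v (f x)}
    (fun _ hx => mem_ab_of_kempeSub_reachable (φ := φ') hx hv) (fun x hx y hxy => ?_)
    (fun x hx => hin _ hx) (fun x hx => hout _ hx)
  exact hx.trans (SimpleGraph.Adj.reachable ⟨f.map_rel hxy.1, hxy.2.1, hxy.2.2⟩)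

end Kempe

section Merge

variable {V : Type*} [DecidableEq V] {G : SimpleGraph V} {u w : V}

theorem mergeTo_val (huw : u ≠ w) (x : V) : (mergeTo u w huw x).val = mergeMap u w x := by
  unfold mergeTo mergeMap
  split_ifs <;> rfl

theorem mergeMap_ne_of_adj (hnadj : ¬ G.Adj u w) {x y : V} (hxy : G.Adj x y) :
    mergeMap u w x ≠ mergeMap u w y := by
  unfold mergeMap
  split_ifs <;> intro h <;> subst_vars
  exacts [hxy.ne rfl, hnadj hxy.symm, hnadj hxy, hxy.ne rfl]

def mergeHom (huw : u ≠ w) (hnadj : ¬ G.Adj u w) :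
    G →g (mergeGraph G u w).induce {y : V | y ≠ w} where
  toFun := mergeTo u w huw
  map_rel' {x y} hxy := by
    show (mergeGraph G u w).Adj (mergeTo u w huw x).val (mergeTo u w huw y).val
    rw [mergeTo_val, mergeTo_val]
    exact ⟨mergeMap_ne_of_adj hnadj hxy, x, y, hxy, rfl, rfl⟩

theorem apply_mergeMap {k : ℕ} {φ : V → Fin k} (hc : φ u = φ w) (x : V) :
    φ (mergeMap u w x) = φ x := by
  unfold mergeMap
  split_ifs with hx
  · rw [hx, hc]
  · rfl

theorem IsProperColoring.merge {k : ℕ} {φ : V → Fin k} (hφ : IsProperColoring G k φ)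
    (hc : φ u = φ w) :
    IsProperColoring ((mergeGraph G u w).induce {y : V | y ≠ w}) k (fun y => φ y.val) := by
  rintro ⟨-, -⟩ ⟨-, -⟩ ⟨-, x, y, hxy, rfl, rfl⟩
  simpa only [apply_mergeMap hc] using hφ hxy

end Merge

/-- Let `G'` be obtained from `G` by identifying two distinct
nonadjacent vertices `u` and `w`, let `φ` be a proper `k`-coloring of `G` with
`φ u = φ w`, inducing the (proper) coloring `φ' = fun y => φ y` of `G'`.  If `ψ'` is
obtained from `φ'` by a single Kempe change in colors `{a, b}`, then the lifted coloring
`ψ = fun x => ψ' (image of x)` is a proper `k`-coloring of `G`, obtained from `φ` by a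
sequence of Kempe changes in colors `{a, b}`; each vertex of `G` changes its color at
most once, and it changes its color iff its image in `G'` does. -/
theorem lift_single_kempe_change {V : Type*} [Fintype V] [DecidableEq V]
    (G : SimpleGraph V) (k : ℕ) (u w : V) (huw : u ≠ w) (hnadj : ¬ G.Adj u w)
    (φ : V → Fin k) (hφ : IsProperColoring G k φ) (hc : φ u = φ w)
    (a b : Fin k) (ψ' : ↥{y : V | y ≠ w} → Fin k)
    (hstep : KempeStepAB ((mergeGraph G u w).induce {y : V | y ≠ w}) a b
      (fun y => φ y.val) ψ') :
    IsProperColoring ((mergeGraph G u w).induce {y : V | y ≠ w}) k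
      (fun y => φ y.val) ∧
    IsProperColoring G k (fun x => ψ' (mergeTo u w huw x)) ∧
    (∀ x : V, ψ' (mergeTo u w huw x) ≠ φ x ↔
      ψ' (mergeTo u w huw x) ≠ φ (mergeTo u w huw x).val) ∧
    ∃ (m : ℕ) (σ : ℕ → V → Fin k),
      σ 0 = φ ∧
      (σ m = fun x => ψ' (mergeTo u w huw x)) ∧
      (∀ i < m, KempeStepAB G a b (σ i) (σ (i + 1))) ∧
      (∀ x : V, changeCount m σ x ≤ 1) := by
  have hφ' := hφ.merge hc
  have color_mergeTo : ∀ x, φ (mergeTo u w huw x).val = φ x := fun x => by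
    rw [mergeTo_val, apply_mergeMap hc]
  obtain ⟨m, σ, h0, hm, hsteps, hcount⟩ := hstep.exists_kempe_seq_comp (mergeHom huw hnadj)
  exact ⟨hφ', (hstep.isProperColoring hφ').comp (mergeHom huw hnadj),
    fun x => by rw [color_mergeTo], m, σ, h0.trans (funext color_mergeTo), hm, hsteps, hcount⟩
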